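/- arXiv:2205.06968 — 6 statements merged into one kernel-verified Lean document; each statement's English description precedes it below -/
import Mathlib

section
/- Let {x_k}_{k≥1} be a sequence of nonnegative real numbers such that x_{k+1} ≤ x_k (1 − P/k^p) + Q/k^{p+q} for all k ≥ 1, where 0 < p ≤ 1, q > 0, P > 0, Q > 0, and additionally P > q in the case p = 1. Set R = P if p < 1 and R = P − q if p = 1. Then limsup_{k→∞} k^q · x_k ≤ Q/R; equivalently, x_k ≤ (Q/R)·k^{−q} + o(k^{−q}) as k → ∞. -/
/-!
With `y k = k ^ q * x k` the recursion reads
`y (k + 1) ≤ (1 + 1/k) ^ q (1 - P / k ^ p) y k + Q (1 + 1/k) ^ q / k ^ p`, and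
`k ^ p (1 - (1 + 1/k) ^ q (1 - P / k ^ p)) → R`, the `-q` for `p = 1` coming from
`k ((1 + 1/k) ^ q - 1) → q`. Hence for `0 < r < R` and `s > 1`, eventually
`y (k + 1) ≤ (1 - a k) y k + a k B` with `a k = r / k ^ p` and `B = Q s / r`.
As `∑ a k = ∞` (because `p ≤ 1`), such a sequence falls below any `c > B`, since otherwise
it would decrease by at least `(c - B) a k` at every step, and it then stays below `c`,
`(1 - a k) y k + a k B` being a convex combination. Letting `r → R` and `s → 1` gives `Q / R`.
-/

open Filter Topology

namespace Chung

section Recursion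

variable {y a : ℕ → ℝ} {B c : ℝ} {K : ℕ}

theorem exists_le_of_le_one_sub_mul_add (hBc : B < c) (ha : ∀ k, 0 ≤ a k) (hsum : ¬Summable a)
    (hy : ∀ k ≥ K, y (k + 1) ≤ (1 - a k) * y k + a k * B) : ∃ n ≥ K, y n ≤ c := by
  by_contra! hgt
  have hdescent : ∀ n ≥ K, y n ≤ y K - (c - B) * ∑ j ∈ Finset.Ico K n, a j := by
    intro n hn
    induction n, hn using Nat.le_induction with
    | base => simp
    | succ n hn ih =>
      rw [Finset.sum_Ico_succ_top hn]
      nlinarith [hy n hn, hgt n hn, ha n]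
  have htail : Tendsto (fun n ↦ ∑ j ∈ Finset.Ico K n, a j) atTop atTop := by
    refine (tendsto_atTop_add_const_right _ (-∑ j ∈ Finset.range K, a j)
      ((not_summable_iff_tendsto_nat_atTop_of_nonneg ha).mp hsum)).congr' ?_
    filter_upwards [eventually_ge_atTop K] with n hn
    rw [Finset.sum_Ico_eq_sub _ hn, sub_eq_add_neg]
  obtain ⟨n, hnK, hn⟩ := ((eventually_ge_atTop K).and
    ((htail.const_mul_atTop (sub_pos.mpr hBc)).eventually_gt_atTop (y K - c))).exists
  linarith [hdescent n hnK, hgt n hnK]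

theorem le_of_le_one_sub_mul_add_of_le (hBc : B ≤ c) (ha : ∀ k ≥ K, 0 ≤ a k ∧ a k ≤ 1)
    (hy : ∀ k ≥ K, y (k + 1) ≤ (1 - a k) * y k + a k * B) (hK : y K ≤ c) :
    ∀ n ≥ K, y n ≤ c := by
  intro n hn
  induction n, hn using Nat.le_induction with
  | base => exact hK
  | succ n hn ih =>
    obtain ⟨ha0, ha1⟩ := ha n hn
    calc y (n + 1) ≤ (1 - a n) * y n + a n * B := hy n hn
      _ ≤ (1 - a n) * c + a n * c := by gcongr
      _ = c := by ring

theorem eventually_le_of_le_one_sub_mul_add (hBc : B < c) (ha : ∀ k, 0 ≤ a k)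
    (hsum : ¬Summable a) (ha1 : ∀ᶠ k in atTop, a k ≤ 1)
    (hy : ∀ᶠ k in atTop, y (k + 1) ≤ (1 - a k) * y k + a k * B) : ∀ᶠ k in atTop, y k ≤ c := by
  obtain ⟨K, hK⟩ := eventually_atTop.mp (ha1.and hy)
  obtain ⟨n, hnK, hn⟩ := exists_le_of_le_one_sub_mul_add hBc ha hsum fun k hk ↦ (hK k hk).2
  exact eventually_atTop.mpr ⟨n, le_of_le_one_sub_mul_add_of_le hBc.le
    (fun k hk ↦ ⟨ha k, (hK k (hnK.trans hk)).1⟩) (fun k hk ↦ (hK k (hnK.trans hk)).2) hn⟩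

end Recursion

theorem tendsto_natCast_mul_one_add_inv_rpow_sub_one (q : ℝ) :
    Tendsto (fun k : ℕ ↦ k * ((1 + (k : ℝ)⁻¹) ^ q - 1)) atTop (𝓝 q) := by
  have hderiv : HasDerivAt (fun t : ℝ ↦ t ^ q) q 1 := by
    simpa using Real.hasDerivAt_rpow_const (x := 1) (p := q) (Or.inl one_ne_zero)
  have hinv : Tendsto (fun k : ℕ ↦ (k : ℝ)⁻¹) atTop (𝓝[>] 0) :=
    tendsto_inv_atTop_nhdsGT_zero.comp tendsto_natCast_atTop_atTop
  simpa [Function.comp_def] using hderiv.tendsto_slope_zero_right.comp hinv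

theorem tendsto_one_add_inv_rpow (q : ℝ) :
    Tendsto (fun k : ℕ ↦ (1 + (k : ℝ)⁻¹) ^ q) atTop (𝓝 1) := by
  have hinv : Tendsto (fun k : ℕ ↦ (k : ℝ)⁻¹) atTop (𝓝 0) :=
    tendsto_inv_atTop_zero.comp tendsto_natCast_atTop_atTop
  simpa using (hinv.const_add 1).rpow_const (p := q) (by simp)

theorem tendsto_rpow_mul_one_sub_one_add_inv_rpow_mul {p : ℝ} (q P : ℝ) (hp1 : p ≤ 1) :
    Tendsto (fun k : ℕ ↦ (k : ℝ) ^ p * (1 - (1 + (k : ℝ)⁻¹) ^ q * (1 - P / (k : ℝ) ^ p)))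
      atTop (𝓝 (if p < 1 then P else P - q)) := by
  have hpow : Tendsto (fun k : ℕ ↦ (k : ℝ) ^ (p - 1)) atTop (𝓝 (if p < 1 then 0 else 1)) := by
    split_ifs with h
    · simpa [Function.comp_def] using
        (tendsto_rpow_neg_atTop (by linarith : 0 < 1 - p)).comp tendsto_natCast_atTop_atTop
    · simp [le_antisymm hp1 (not_lt.mp h)]
  have hlim := ((tendsto_one_add_inv_rpow q).mul_const P).sub
    (hpow.mul (tendsto_natCast_mul_one_add_inv_rpow_sub_one q))
  rw [show 1 * P - (if p < 1 then 0 else 1) * q = if p < 1 then P else P - q by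
    split_ifs <;> ring] at hlim
  refine hlim.congr' ?_
  filter_upwards [eventually_gt_atTop 0] with k hk
  have hk : (0 : ℝ) < k := by exact_mod_cast hk
  have hsplit : (k : ℝ) ^ p = (k : ℝ) ^ (p - 1) * k := by
    rw [Real.rpow_sub hk, Real.rpow_one, div_mul_cancel₀ _ hk.ne']
  have : (k : ℝ) ^ p ≠ 0 := (Real.rpow_pos_of_pos hk p).ne'
  field_simp
  rw [hsplit]
  ring

theorem exists_lt_lt_mul_div_lt {Q R c : ℝ} (hR : 0 < R) (hc : Q / R < c) :
    ∃ r s : ℝ, 0 < r ∧ r < R ∧ 1 < s ∧ Q * s / r < c := by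
  have hcont : ContinuousAt (fun ε : ℝ ↦ Q * (1 + ε) / (R - ε)) 0 :=
    (continuousAt_const.mul (continuousAt_const.add continuousAt_id)).div
      (continuousAt_const.sub continuousAt_id) (by simpa using hR.ne')
  have hlt : ∀ᶠ ε in 𝓝[>] (0 : ℝ), Q * (1 + ε) / (R - ε) < c :=
    nhdsWithin_le_nhds (hcont.eventually (gt_mem_nhds (by simpa using hc)))
  have hsmall : ∀ᶠ ε in 𝓝[>] (0 : ℝ), ε < R := nhdsWithin_le_nhds (gt_mem_nhds hR)
  obtain ⟨ε, (hε : 0 < ε), hεR, hεc⟩ :=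
    ((eventually_mem_nhdsWithin (a := (0 : ℝ)) (s := Set.Ioi 0)).and (hsmall.and hlt)).exists
  exact ⟨R - ε, 1 + ε, by linarith, by linarith, by linarith, hεc⟩

theorem eventually_rpow_mul_succ_le {x : ℕ → ℝ} {p q P Q r s : ℝ} (hp1 : p ≤ 1) (hQ : 0 ≤ Q)
    (hx : ∀ k : ℕ, 1 ≤ k → 0 ≤ x k)
    (hrec : ∀ k : ℕ, 1 ≤ k →
      x (k + 1) ≤ x k * (1 - P / (k : ℝ) ^ p) + Q / (k : ℝ) ^ (p + q))
    (hr0 : 0 < r) (hr : r < if p < 1 then P else P - q) (hs : 1 < s) :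
    ∀ᶠ k : ℕ in atTop, ((k + 1 : ℕ) : ℝ) ^ q * x (k + 1) ≤
      (1 - r / (k : ℝ) ^ p) * ((k : ℝ) ^ q * x k) + r / (k : ℝ) ^ p * (Q * s / r) := by
  filter_upwards [eventually_ge_atTop 1,
    (tendsto_rpow_mul_one_sub_one_add_inv_rpow_mul q P hp1).eventually_const_lt hr,
    (tendsto_one_add_inv_rpow q).eventually_lt_const hs] with k hk hcoef he
  set e := (1 + (k : ℝ)⁻¹) ^ q
  have hk0 : (0 : ℝ) < k := by exact_mod_cast hk
  have hkp : (0 : ℝ) < (k : ℝ) ^ p := Real.rpow_pos_of_pos hk0 p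
  have hkq : (0 : ℝ) < (k : ℝ) ^ q := Real.rpow_pos_of_pos hk0 q
  have he0 : 0 ≤ e := Real.rpow_nonneg (by positivity) q
  have hsucc : ((k + 1 : ℕ) : ℝ) ^ q = (k : ℝ) ^ q * e := by
    rw [← Real.mul_rpow hk0.le (by positivity), mul_add, mul_inv_cancel₀ hk0.ne']
    push_cast
    ring_nf
  have hcontract : e * (1 - P / (k : ℝ) ^ p) ≤ 1 - r / (k : ℝ) ^ p := by
    linarith [(div_lt_iff₀' hkp).mpr hcoef]
  calc ((k + 1 : ℕ) : ℝ) ^ q * x (k + 1)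
      ≤ (k : ℝ) ^ q * e * (x k * (1 - P / (k : ℝ) ^ p) + Q / (k : ℝ) ^ (p + q)) := by
        rw [hsucc]; gcongr; exact hrec k hk
    _ = e * (1 - P / (k : ℝ) ^ p) * ((k : ℝ) ^ q * x k) + Q * e / (k : ℝ) ^ p := by
        rw [Real.rpow_add hk0]; field_simp
    _ ≤ (1 - r / (k : ℝ) ^ p) * ((k : ℝ) ^ q * x k) + Q * s / (k : ℝ) ^ p := by
        gcongr
        exact mul_nonneg hkq.le (hx k hk)
    _ = (1 - r / (k : ℝ) ^ p) * ((k : ℝ) ^ q * x k) + r / (k : ℝ) ^ p * (Q * s / r) := by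
        field_simp

end Chung

theorem stmt_0_general (x : ℕ → ℝ) (p q P Q R : ℝ)
    (hp : 0 < p) (hp1 : p ≤ 1) (hP : 0 < P) (hQ : 0 < Q)
    (hPq : p = 1 → q < P)
    (hR : R = if p < 1 then P else P - q)
    (hx : ∀ k : ℕ, 1 ≤ k → 0 ≤ x k)
    (hrec : ∀ k : ℕ, 1 ≤ k →
      x (k + 1) ≤ x k * (1 - P / (k : ℝ) ^ p) + Q / (k : ℝ) ^ (p + q)) :
    Filter.limsup (fun k : ℕ => (k : ℝ) ^ q * x k) Filter.atTop ≤ Q / R := by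
  have hR0 : 0 < R := by
    rcases hp1.lt_or_eq with h | h
    · simpa [hR, h] using hP
    · simpa [hR, h] using hPq h
  have hcobdd : IsCoboundedUnder (· ≤ ·) atTop (fun k : ℕ ↦ (k : ℝ) ^ q * x k) :=
    isCoboundedUnder_le_of_eventually_le atTop (x := 0) <| eventually_atTop.mpr
      ⟨1, fun k hk ↦ mul_nonneg (Real.rpow_nonneg k.cast_nonneg q) (hx k hk)⟩
  refine le_of_forall_gt_imp_ge_of_dense fun c hc ↦ limsup_le_of_le hcobdd ?_
  obtain ⟨r, s, hr0, hrR, hs, hsc⟩ := Chung.exists_lt_lt_mul_div_lt hR0 hc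
  have hsum : ¬Summable fun k : ℕ ↦ r / (k : ℝ) ^ p := by
    simpa [div_eq_mul_inv, summable_mul_left_iff hr0.ne', Real.summable_nat_rpow_inv] using hp1
  have hle_one : ∀ᶠ k : ℕ in atTop, r / (k : ℝ) ^ p ≤ 1 :=
    (((tendsto_rpow_atTop hp).comp tendsto_natCast_atTop_atTop).eventually_ge_atTop r).mono
      fun k hk ↦ div_le_one_of_le₀ hk (by positivity)
  exact Chung.eventually_le_of_le_one_sub_mul_add hsc (fun k ↦ by positivity) hsum hle_one
    (Chung.eventually_rpow_mul_succ_le hp1 hQ.le hx hrec hr0 (hR ▸ hrR) hs)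

/-- Chung's lemma on recursive sequences. -/
theorem stmt_0 (x : ℕ → ℝ) (p q P Q R : ℝ)
    (hp : 0 < p) (hp1 : p ≤ 1) (hq : 0 < q) (hP : 0 < P) (hQ : 0 < Q)
    (hPq : p = 1 → q < P)
    (hR : R = if p < 1 then P else P - q)
    (hx : ∀ k : ℕ, 1 ≤ k → 0 ≤ x k)
    (hrec : ∀ k : ℕ, 1 ≤ k →
      x (k + 1) ≤ x k * (1 - P / (k : ℝ) ^ p) + Q / (k : ℝ) ^ (p + q)) :
    Filter.limsup (fun k : ℕ => (k : ℝ) ^ q * x k) Filter.atTop ≤ Q / R :=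
  stmt_0_general x p q P Q R hp hp1 hP hQ hPq hR hx hrec
end

section
/- Let β > 1/6 and H > 0, and let {x_k}_{k≥1} be a sequence of nonnegative real numbers satisfying x_{k+1} ≤ (1 − 2β/k) x_k + H/k^{4/3} for all k ≥ 1. Then limsup_{k→∞} k^{1/3} · x_k ≤ H/(2β − 1/3); in particular x_k = O(k^{−1/3}). -/
/-!
Write `a = 2β`, `p = 1/3` and `M = H / (a - p)`. By Bernoulli's inequality
`(k + 1)^(-p) ≥ k^(-p) - p k^(-p-1)`, and `a M - H = p M`, so `M k^(-p)` is a supersolution of the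
recursion: the error `e k = x k - M k^(-p)` satisfies `e (k + 1) ≤ (1 - a/k) e k`. As
`(k + 1)^a (1 - a/k) ≤ k^a exp (a/k) exp (-a/k) = k^a`, the weighted positive part
`k^a max (e k) 0` is eventually nonincreasing. Hence `x k ≤ M k^(-p) + C k^(-a)`, and the
second term is negligible because `a > p`.
-/

open Real Filter Asymptotics Topology

theorem Real.one_sub_mul_le_one_add_rpow_neg {s p : ℝ} (hs : -1 < s) (hp : 0 ≤ p) :
    1 - p * s ≤ (1 + s) ^ (-p) := by
  have hpos : 0 < 1 + s := by linarith
  have hlog : p * log (1 + s) ≤ p * s :=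
    mul_le_mul_of_nonneg_left (by linarith [log_le_sub_one_of_pos hpos]) hp
  rw [rpow_def_of_pos hpos]
  linarith [add_one_le_exp (log (1 + s) * -p)]

theorem Real.rpow_neg_sub_mul_le_add_one_rpow_neg {t p : ℝ} (ht : 0 < t) (hp : 0 ≤ p) :
    t ^ (-p) - p * t ^ (-p - 1) ≤ (t + 1) ^ (-p) := by
  have hsplit : t + 1 = t * (1 + t⁻¹) := by field_simp
  have hB := one_sub_mul_le_one_add_rpow_neg (by linarith [inv_pos.2 ht] : -1 < t⁻¹) hp
  rw [hsplit, mul_rpow ht.le (by positivity), rpow_sub_one ht.ne']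
  calc t ^ (-p) - p * (t ^ (-p) / t) = t ^ (-p) * (1 - p * t⁻¹) := by ring
    _ ≤ t ^ (-p) * (1 + t⁻¹) ^ (-p) := by gcongr

theorem Real.add_one_rpow_mul_one_sub_div_le {t a : ℝ} (ht : 0 < t) (ha : 0 ≤ a) :
    (t + 1) ^ a * (1 - a / t) ≤ t ^ a := by
  rcases lt_or_ge (1 - a / t) 0 with hneg | hnonneg
  · nlinarith [rpow_nonneg (by linarith : (0 : ℝ) ≤ t + 1) a, rpow_nonneg ht.le a]
  have hsplit : t + 1 = t * (1 + t⁻¹) := by field_simp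
  have hpos : 0 < 1 + t⁻¹ := by positivity
  have hgrowth : (1 + t⁻¹) ^ a ≤ exp (a / t) := by
    rw [rpow_def_of_pos hpos, exp_le_exp, mul_comm, div_eq_mul_inv]
    exact mul_le_mul_of_nonneg_left (by linarith [log_le_sub_one_of_pos hpos]) ha
  have hdecay : 1 - a / t ≤ exp (-(a / t)) := by linarith [add_one_le_exp (-(a / t))]
  rw [hsplit, mul_rpow ht.le hpos.le]
  calc t ^ a * (1 + t⁻¹) ^ a * (1 - a / t) ≤ t ^ a * exp (a / t) * exp (-(a / t)) := by
        gcongr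
    _ = t ^ a := by rw [mul_assoc, ← exp_add, add_neg_cancel, exp_zero, mul_one]

theorem exists_eventually_le_mul_rpow_neg_of_le_one_sub_div_mul {e : ℕ → ℝ} {a : ℝ}
    (ha : 0 ≤ a) (he : ∀ᶠ k : ℕ in atTop, e (k + 1) ≤ (1 - a / k) * e k) :
    ∃ C, ∀ᶠ k : ℕ in atTop, e k ≤ C * (k : ℝ) ^ (-a) := by
  obtain ⟨N, hN⟩ := eventually_atTop.1 (he.and (eventually_gt_atTop ⌈a⌉₊))
  set y : ℕ → ℝ := fun k => (k : ℝ) ^ a * max (e k) 0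
  have hanti : AntitoneOn y (Set.Ici N) := antitoneOn_nat_Ici_of_succ_le fun k hk => by
    obtain ⟨hstep, hka⟩ := hN k hk
    have hk : a < k := Nat.lt_of_ceil_lt hka
    have hfactor : 0 ≤ 1 - a / k := by
      rw [sub_nonneg, div_le_one (ha.trans_lt hk)]; exact hk.le
    have hmax : max (e (k + 1)) 0 ≤ (1 - a / k) * max (e k) 0 :=
      max_le (hstep.trans (by gcongr; exact le_max_left _ _)) (by positivity)
    calc y (k + 1) ≤ ((k : ℝ) + 1) ^ a * ((1 - a / k) * max (e k) 0) := by
          simp only [y]; push_cast; gcongr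
      _ = ((k : ℝ) + 1) ^ a * (1 - a / k) * max (e k) 0 := by ring
      _ ≤ y k := mul_le_mul_of_nonneg_right
          (add_one_rpow_mul_one_sub_div_le (ha.trans_lt hk) ha) (le_max_right _ _)
  refine ⟨y N, eventually_atTop.2 ⟨N, fun k hk => ?_⟩⟩
  have hk0 : 0 < (k : ℝ) := ha.trans_lt (Nat.lt_of_ceil_lt (hN k hk).2)
  calc e k ≤ max (e k) 0 := le_max_left _ _
    _ = y k * (k : ℝ) ^ (-a) := by
        simp only [y]
        rw [mul_comm, ← mul_assoc, ← rpow_add hk0, neg_add_cancel, rpow_zero, one_mul]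
    _ ≤ y N * (k : ℝ) ^ (-a) := by gcongr; exact hanti Set.self_mem_Ici hk hk

theorem exists_eventually_le_of_le_one_sub_div_mul_add {x : ℕ → ℝ} {a p H : ℝ} (hp : 0 ≤ p)
    (hpa : p < a) (hH : 0 ≤ H)
    (hrec : ∀ᶠ k : ℕ in atTop, x (k + 1) ≤ (1 - a / k) * x k + H / (k : ℝ) ^ (1 + p)) :
    ∃ C, ∀ᶠ k : ℕ in atTop, x k ≤ H / (a - p) * (k : ℝ) ^ (-p) + C * (k : ℝ) ^ (-a) := by
  have hδ : a - p ≠ 0 := (sub_pos.2 hpa).ne'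
  set M := H / (a - p)
  have hHM : H = (a - p) * M := by simp only [M]; field_simp
  have hM : 0 ≤ M := div_nonneg hH (sub_pos.2 hpa).le
  suffices he : ∀ᶠ k : ℕ in atTop, x (k + 1) - M * ((k + 1 : ℕ) : ℝ) ^ (-p)
      ≤ (1 - a / k) * (x k - M * (k : ℝ) ^ (-p)) by
    obtain ⟨C, hC⟩ := exists_eventually_le_mul_rpow_neg_of_le_one_sub_div_mul
      (e := fun k => x k - M * (k : ℝ) ^ (-p)) (hp.trans hpa.le) he
    exact ⟨C, hC.mono fun k hk => by linarith⟩
  filter_upwards [hrec, eventually_gt_atTop 0] with k hk hk0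
  have hk0 : (0 : ℝ) < k := by exact_mod_cast hk0
  have hconvex := mul_le_mul_of_nonneg_left (rpow_neg_sub_mul_le_add_one_rpow_neg hk0 hp) hM
  have hforcing : H / (k : ℝ) ^ (1 + p) = H * ((k : ℝ) ^ (-p) / k) := by
    rw [rpow_add hk0, rpow_one, rpow_neg hk0.le]; field_simp
  rw [rpow_sub_one hk0.ne'] at hconvex
  rw [hforcing] at hk
  push_cast
  have hbalance : a / k * (M * (k : ℝ) ^ (-p))
      = H * ((k : ℝ) ^ (-p) / k) + M * (p * ((k : ℝ) ^ (-p) / k)) := by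
    rw [hHM]; ring
  linarith

theorem limsup_rpow_mul_le_of_eventually_le {x : ℕ → ℝ} {a p M C : ℝ} (hpa : p < a)
    (hx : ∀ᶠ k : ℕ in atTop, 0 ≤ x k)
    (hle : ∀ᶠ k : ℕ in atTop, x k ≤ M * (k : ℝ) ^ (-p) + C * (k : ℝ) ^ (-a)) :
    limsup (fun k : ℕ => (k : ℝ) ^ p * x k) atTop ≤ M := by
  have hbound : ∀ᶠ k : ℕ in atTop, (k : ℝ) ^ p * x k ≤ M + C * (k : ℝ) ^ (-(a - p)) := by
    filter_upwards [hle, eventually_gt_atTop 0] with k hk hk0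
    have hk0 : (0 : ℝ) < k := by exact_mod_cast hk0
    calc (k : ℝ) ^ p * x k ≤ (k : ℝ) ^ p * (M * (k : ℝ) ^ (-p) + C * (k : ℝ) ^ (-a)) := by
          gcongr
      _ = M * (k : ℝ) ^ (p + -p) + C * (k : ℝ) ^ (p + -a) := by
          rw [rpow_add hk0, rpow_add hk0]; ring
      _ = M + C * (k : ℝ) ^ (-(a - p)) := by rw [add_neg_cancel, rpow_zero]; ring_nf
  have hlim : Tendsto (fun k : ℕ => M + C * (k : ℝ) ^ (-(a - p))) atTop (𝓝 M) := by
    simpa using ((tendsto_rpow_neg_atTop (sub_pos.2 hpa)).comp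
      tendsto_natCast_atTop_atTop).const_mul C |>.const_add M
  have hcobdd : IsCoboundedUnder (· ≤ ·) atTop fun k : ℕ => (k : ℝ) ^ p * x k :=
    isCoboundedUnder_le_of_eventually_le atTop (x := 0)
      (hx.mono fun k hk => mul_nonneg (rpow_nonneg k.cast_nonneg p) hk)
  exact (limsup_le_limsup hbound hcobdd hlim.isBoundedUnder_le).trans hlim.limsup_eq.le

theorem isBigO_rpow_neg_of_eventually_le {x : ℕ → ℝ} {a p M C : ℝ} (hpa : p ≤ a)
    (hx : ∀ᶠ k : ℕ in atTop, 0 ≤ x k)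
    (hle : ∀ᶠ k : ℕ in atTop, x k ≤ M * (k : ℝ) ^ (-p) + C * (k : ℝ) ^ (-a)) :
    x =O[atTop] fun k : ℕ => (k : ℝ) ^ (-p) := by
  have hdecay : (fun k : ℕ => (k : ℝ) ^ (-a)) =O[atTop] fun k : ℕ => (k : ℝ) ^ (-p) := by
    refine IsBigO.of_bound' ?_
    filter_upwards [eventually_ge_atTop 1] with k hk
    have hk : (1 : ℝ) ≤ k := by exact_mod_cast hk
    rw [norm_of_nonneg (by positivity), norm_of_nonneg (by positivity)]
    exact rpow_le_rpow_of_exponent_le hk (neg_le_neg hpa)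
  have hmajorant := ((isBigO_refl _ _).const_mul_left M).add (hdecay.const_mul_left C)
  refine (IsBigO.of_bound' ?_).trans hmajorant
  filter_upwards [hx, hle] with k hk hkle
  rw [norm_of_nonneg hk]
  exact hkle.trans (le_abs_self _)

/-- The rate recursion for the case `β > 1/6`. -/
theorem stmt_1 (x : ℕ → ℝ) (β H : ℝ)
    (hβ : 1 / 6 < β) (hH : 0 < H)
    (hx : ∀ k : ℕ, 1 ≤ k → 0 ≤ x k)
    (hrec : ∀ k : ℕ, 1 ≤ k →
      x (k + 1) ≤ (1 - 2 * β / (k : ℝ)) * x k + H / (k : ℝ) ^ ((4 : ℝ) / 3)) :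
    Filter.limsup (fun k : ℕ => (k : ℝ) ^ ((1 : ℝ) / 3) * x k) Filter.atTop
        ≤ H / (2 * β - 1 / 3) ∧
      (fun k : ℕ => x k) =O[Filter.atTop] fun k : ℕ => (k : ℝ) ^ (-(1 : ℝ) / 3) := by
  have hpa : (1 : ℝ) / 3 < 2 * β := by linarith
  have hx' : ∀ᶠ k : ℕ in atTop, 0 ≤ x k := eventually_atTop.2 ⟨1, hx⟩
  have hrec' : ∀ᶠ k : ℕ in atTop,
      x (k + 1) ≤ (1 - 2 * β / k) * x k + H / (k : ℝ) ^ (1 + (1 : ℝ) / 3) :=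
    eventually_atTop.2 ⟨1, fun k hk => by
      rw [show (1 : ℝ) + 1 / 3 = 4 / 3 by norm_num]; exact hrec k hk⟩
  obtain ⟨C, hC⟩ := exists_eventually_le_of_le_one_sub_div_mul_add (by norm_num) hpa hH.le hrec'
  refine ⟨limsup_rpow_mul_le_of_eventually_le hpa hx' hC, ?_⟩
  rw [neg_div]
  exact isBigO_rpow_neg_of_eventually_le hpa.le hx' hC
end

section
/- Let 0 < β < 1/6 and H > 0, and let {x_k}_{k≥1} be a sequence of nonnegative real numbers satisfying x_{k+1} ≤ (1 − 2β/k) x_k + H/k^{4/3} for all k ≥ 1. Then there exists a constant C > 0 (depending only on β, H, and x_1) such that x_k ≤ C · k^{−2β} for all k ≥ 1; that is, x_k = O(k^{−2β}). -/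
/-!
Weighting by `k ^ a` absorbs the contraction factor: Bernoulli's inequality
`(1 + 1/k) ^ a ≤ 1 + a/k` gives `(1 - a/k) * (k + 1) ^ a ≤ k ^ a`, so `y k = k ^ a * x k` satisfies
`y (k + 1) ≤ y k + 2 ^ a * H * k ^ (a - p)`. For `a - p < -1` the increments are summable,
hence `y` is bounded and `x k = O(k ^ (-a))`.
-/

open Real Finset

lemma one_sub_div_mul_add_one_rpow_le {a k : ℝ} (ha0 : 0 ≤ a) (ha1 : a ≤ 1) (hk : 0 < k) :
    (1 - a / k) * (k + 1) ^ a ≤ k ^ a := by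
  have hbern : (1 + 1 / k) ^ a ≤ 1 + a * (1 / k) :=
    rpow_one_add_le_one_add_mul_self (by linarith [one_div_pos.mpr hk]) ha0 ha1
  have hsplit : (k + 1) ^ a = k ^ a * (1 + 1 / k) ^ a := by
    rw [← mul_rpow hk.le (by positivity), mul_add, mul_one_div_cancel hk.ne', mul_one]
  have hka : 0 ≤ k ^ a := rpow_nonneg hk.le a
  rcases le_or_gt 0 (1 - a / k) with h | h
  · calc (1 - a / k) * (k + 1) ^ a ≤ (1 - a / k) * (k ^ a * (1 + a * (1 / k))) := by
          rw [hsplit]; gcongr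
      _ = k ^ a * (1 - (a / k) ^ 2) := by ring
      _ ≤ k ^ a := by nlinarith [sq_nonneg (a / k)]
  · nlinarith [rpow_pos_of_pos (by linarith : 0 < k + 1) a]

lemma le_add_tsum_of_succ_le_add {y b : ℕ → ℝ} {m : ℕ} (hb : Summable b) (hb0 : ∀ k, 0 ≤ b k)
    (hy : ∀ k ≥ m, y (k + 1) ≤ y k + b k) {n : ℕ} (hn : m ≤ n) :
    y n ≤ y m + ∑' k, b k := by
  have hfin := discrete_gronwall_prod_general (c := fun _ => (1 : ℝ)) (b := b)
    (fun k hk => by simpa using hy k hk) (fun _ _ => zero_le_one) hn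
  simp only [prod_const_one, mul_one] at hfin
  linarith [hb.sum_le_tsum (Ico m n) (fun k _ => hb0 k)]

variable {x : ℕ → ℝ} {a p H : ℝ}

lemma rpow_mul_succ_le_add (ha0 : 0 ≤ a) (ha1 : a ≤ 1) (hH : 0 ≤ H) {k : ℕ} (hk : 1 ≤ k)
    (hxk : 0 ≤ x k) (hrec : x (k + 1) ≤ (1 - a / k) * x k + H / (k : ℝ) ^ p) :
    ((k + 1 : ℕ) : ℝ) ^ a * x (k + 1) ≤ (k : ℝ) ^ a * x k + 2 ^ a * H * (k : ℝ) ^ (a - p) := by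
  have hk0 : (0 : ℝ) < k := by exact_mod_cast hk
  have hdouble : ((k : ℝ) + 1) ^ a ≤ 2 ^ a * (k : ℝ) ^ a := by
    rw [← mul_rpow zero_le_two hk0.le]
    exact rpow_le_rpow (by positivity) (by linarith [(Nat.one_le_cast (α := ℝ)).mpr hk]) ha0
  have hdecay : ((k : ℝ) + 1) ^ a * (H / (k : ℝ) ^ p) ≤ 2 ^ a * H * (k : ℝ) ^ (a - p) := by
    rw [rpow_sub hk0]
    calc ((k : ℝ) + 1) ^ a * (H / (k : ℝ) ^ p) ≤ 2 ^ a * (k : ℝ) ^ a * (H / (k : ℝ) ^ p) := by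
          gcongr
      _ = 2 ^ a * H * ((k : ℝ) ^ a / (k : ℝ) ^ p) := by ring
  push_cast
  calc ((k : ℝ) + 1) ^ a * x (k + 1)
      ≤ ((k : ℝ) + 1) ^ a * ((1 - a / k) * x k + H / (k : ℝ) ^ p) := by gcongr
    _ = (1 - a / k) * ((k : ℝ) + 1) ^ a * x k + ((k : ℝ) + 1) ^ a * (H / (k : ℝ) ^ p) := by ring
    _ ≤ (k : ℝ) ^ a * x k + 2 ^ a * H * (k : ℝ) ^ (a - p) := by
      gcongr
      exact one_sub_div_mul_add_one_rpow_le ha0 ha1 hk0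

theorem exists_pos_le_mul_rpow_neg_of_rate_recursion (ha0 : 0 ≤ a) (ha1 : a ≤ 1)
    (hap : a - p < -1) (hH : 0 ≤ H) (hx : ∀ k : ℕ, 1 ≤ k → 0 ≤ x k)
    (hrec : ∀ k : ℕ, 1 ≤ k → x (k + 1) ≤ (1 - a / k) * x k + H / (k : ℝ) ^ p) :
    ∃ C : ℝ, 0 < C ∧ ∀ k : ℕ, 1 ≤ k → x k ≤ C * (k : ℝ) ^ (-a) := by
  set b : ℕ → ℝ := fun k => 2 ^ a * H * (k : ℝ) ^ (a - p)
  have hb : Summable b := (summable_nat_rpow.mpr hap).mul_left _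
  have hb0 : ∀ k, 0 ≤ b k := fun k => by positivity
  have hbounded : ∀ k : ℕ, 1 ≤ k → (k : ℝ) ^ a * x k ≤ x 1 + ∑' k, b k := fun k hk => by
    simpa using le_add_tsum_of_succ_le_add (y := fun k => (k : ℝ) ^ a * x k) hb hb0
      (fun j hj => rpow_mul_succ_le_add ha0 ha1 hH hj (hx j hj) (hrec j hj)) hk
  have hS : 0 ≤ ∑' k, b k := tsum_nonneg hb0
  refine ⟨x 1 + ∑' k, b k + 1, by linarith [hx 1 le_rfl], fun k hk => ?_⟩
  have hk0 : (0 : ℝ) < k := by exact_mod_cast hk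
  calc x k = (k : ℝ) ^ a * x k * (k : ℝ) ^ (-a) := by
        rw [rpow_neg hk0.le, mul_right_comm, mul_inv_cancel₀ (rpow_pos_of_pos hk0 a).ne', one_mul]
    _ ≤ (x 1 + ∑' k, b k + 1) * (k : ℝ) ^ (-a) := by
        gcongr
        linarith [hbounded k hk]

/-- The rate recursion for the case `0 < β < 1/6`. -/
theorem stmt_2 (x : ℕ → ℝ) (β H : ℝ)
    (hβ0 : 0 < β) (hβ : β < 1 / 6) (hH : 0 < H)
    (hx : ∀ k : ℕ, 1 ≤ k → 0 ≤ x k)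
    (hrec : ∀ k : ℕ, 1 ≤ k →
      x (k + 1) ≤ (1 - 2 * β / (k : ℝ)) * x k + H / (k : ℝ) ^ ((4 : ℝ) / 3)) :
    ∃ C : ℝ, 0 < C ∧ ∀ k : ℕ, 1 ≤ k → x k ≤ C * (k : ℝ) ^ (-(2 * β)) :=
  exists_pos_le_mul_rpow_neg_of_rate_recursion (by linarith) (by linarith) (by linarith) hH.le
    hx hrec
end

section
/- Let E be a real inner product space, let B ≥ 0, let a' ∈ E and let a_1, …, a_{K+1} ∈ E be points with ‖a_k − a'‖ ≤ B for every k = 1, …, K+1. Let γ_1 ≥ γ_2 ≥ ⋯ ≥ γ_K > 0 be a nonincreasing sequence of positive reals. Then ∑_{k=1}^{K} (1/(2γ_k)) (‖a_k − a'‖² − ‖a_{k+1} − a'‖²) ≤ B²/(2γ_K). -/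
lemma stmt_7_aux {E : Type*} [NormedAddCommGroup E]
    (B : ℝ) (hB : 0 ≤ B) (a' : E) (a : ℕ → E) (γ : ℕ → ℝ) :
    ∀ K : ℕ, 1 ≤ K →
    (∀ k : ℕ, 1 ≤ k → k ≤ K + 1 → ‖a k - a'‖ ≤ B) →
    (∀ k : ℕ, 1 ≤ k → k ≤ K → 0 < γ k) →
    (∀ k : ℕ, 1 ≤ k → k < K → γ (k + 1) ≤ γ k) →
    ∑ k ∈ Finset.Icc 1 K, (1 / (2 * γ k)) * (‖a k - a'‖ ^ 2 - ‖a (k + 1) - a'‖ ^ 2)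
      ≤ (B ^ 2 - ‖a (K + 1) - a'‖ ^ 2) / (2 * γ K) := by
  intro K hK
  induction K, hK using Nat.le_induction with
  | base =>
    intro ha hγpos hγmono
    have h1 : ‖a 1 - a'‖ ≤ B := ha 1 le_rfl (by norm_num)
    have hγ1 : 0 < γ 1 := hγpos 1 le_rfl le_rfl
    rw [show Finset.Icc 1 1 = {1} from rfl, Finset.sum_singleton, one_div, inv_mul_eq_div]
    gcongr ?_ / _
    nlinarith [norm_nonneg (a 1 - a')]
  | succ n hn ih =>
    intro ha hγpos hγmono
    have hγn : 0 < γ n := hγpos n hn (by omega)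
    have hγn1 : 0 < γ (n + 1) := hγpos (n + 1) (by omega) le_rfl
    have hmono : γ (n + 1) ≤ γ n := hγmono n hn (by omega)
    have hfn1 : ‖a (n + 1) - a'‖ ≤ B := ha (n + 1) (by omega) (by omega)
    have hfn1' : ‖a (n + 1) - a'‖ ^ 2 ≤ B ^ 2 := by
      nlinarith [norm_nonneg (a (n + 1) - a')]
    have hih := ih (fun k h1 h2 => ha k h1 (by omega))
      (fun k h1 h2 => hγpos k h1 (by omega)) (fun k h1 h2 => hγmono k h1 (by omega))
    rw [Finset.sum_Icc_succ_top (by omega)]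
    have step1 : (B ^ 2 - ‖a (n + 1) - a'‖ ^ 2) / (2 * γ n)
        ≤ (B ^ 2 - ‖a (n + 1) - a'‖ ^ 2) / (2 * γ (n + 1)) := by
      gcongr (B ^ 2 - ‖a (n + 1) - a'‖ ^ 2) / (2 * ?_)
      all_goals linarith
    have heq : (B ^ 2 - ‖a (n + 1) - a'‖ ^ 2) / (2 * γ (n + 1))
        + (1 / (2 * γ (n + 1))) * (‖a (n + 1) - a'‖ ^ 2 - ‖a (n + 1 + 1) - a'‖ ^ 2)
        = (B ^ 2 - ‖a (n + 1 + 1) - a'‖ ^ 2) / (2 * γ (n + 1)) := by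
      field_simp
      try ring
    linarith [add_le_add_right hih ((1 / (2 * γ (n + 1))) * (‖a (n + 1) - a'‖ ^ 2 - ‖a (n + 1 + 1) - a'‖ ^ 2))]

/-- Abel-summation/telescoping bound for Term 1 in the regret analysis. -/
theorem stmt_7 {E : Type*} [NormedAddCommGroup E] [InnerProductSpace ℝ E]
    (B : ℝ) (hB : 0 ≤ B) (K : ℕ) (hK : 1 ≤ K) (a' : E) (a : ℕ → E)
    (ha : ∀ k : ℕ, 1 ≤ k → k ≤ K + 1 → ‖a k - a'‖ ≤ B)
    (γ : ℕ → ℝ)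
    (hγpos : ∀ k : ℕ, 1 ≤ k → k ≤ K → 0 < γ k)
    (hγmono : ∀ k : ℕ, 1 ≤ k → k < K → γ (k + 1) ≤ γ k) :
    ∑ k ∈ Finset.Icc 1 K, (1 / (2 * γ k)) * (‖a k - a'‖ ^ 2 - ‖a (k + 1) - a'‖ ^ 2)
      ≤ B ^ 2 / (2 * γ K) := by
  have h := stmt_7_aux B hB a' a γ K hK ha hγpos hγmono
  have hγK : 0 < γ K := hγpos K hK le_rfl
  have : (B ^ 2 - ‖a (K + 1) - a'‖ ^ 2) / (2 * γ K) ≤ B ^ 2 / (2 * γ K) := by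
    gcongr
    all_goals nlinarith [norm_nonneg (a (K + 1) - a')]
  linarith
end

section
/- Let (Ω, F, P) be a probability space and let {I_k}_{k≥1} be independent, identically distributed random variables taking values in {0, 1} with P(I_k = 1) = p for some p ∈ (0, 1]. Let q ∈ (1/2, 1] and σ ∈ (0, 1/2). Then almost surely there exist a constant C > 0 and an index K such that for all k ≥ K one has ∑_{t=1}^{k} I_t > 0 and |(∑_{t=1}^{k} I_t)^{−q} − (k p)^{−q}| ≤ C · k^{−(1/2 + q − σ)}. -/
open MeasureTheory ProbabilityTheory Real Filter

/-!
By Hoeffding's inequality, `P(|Γ_k - k p| ≥ k ^ (1/2 + σ)) ≤ 2 exp (-2 k ^ (2σ))`, which is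
summable in `k`, so by Borel–Cantelli almost surely `|Γ_k - k p| < k ^ (1/2 + σ)` for all large
`k`. Since `k ^ (1/2 + σ) = o(k)`, this forces `Γ_k ≥ k p / 2`, and on `[k p / 2, ∞)` the map
`x ↦ x ^ (-q)` is `q (k p / 2) ^ (-q - 1)`-Lipschitz, which gives the rate
`k ^ (-q - 1) · k ^ (1/2 + σ)`.
-/

lemma summable_exp_neg_mul_rpow {c a : ℝ} (hc : 0 < c) (ha : 0 < a) :
    Summable fun k : ℕ => exp (-(c * (k : ℝ) ^ a)) := by
  have h := (isLittleO_exp_neg_mul_rpow_atTop hc (-2 / a)).isBigO.comp_tendsto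
    ((tendsto_rpow_atTop ha).comp tendsto_natCast_atTop_atTop)
  refine summable_of_isBigO_nat (summable_nat_rpow.mpr (by norm_num : (-2 : ℝ) < -1)) ?_
  refine h.congr (fun k => by simp [neg_mul]) (fun k => ?_)
  simp only [Function.comp_apply]
  rw [← rpow_mul k.cast_nonneg, mul_div_cancel₀ _ ha.ne']

lemma eventually_rpow_le_mul_natCast {α c : ℝ} (hα : α < 1) (hc : 0 < c) :
    ∀ᶠ k : ℕ in atTop, (k : ℝ) ^ α ≤ c * k := by
  have h := (tendsto_rpow_neg_atTop (sub_pos.2 hα)).comp tendsto_natCast_atTop_atTop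
  filter_upwards [h.eventually (gt_mem_nhds hc), eventually_gt_atTop 0] with k hkc hk
  have hk' : (0 : ℝ) < k := Nat.cast_pos.2 hk
  calc (k : ℝ) ^ α = (k : ℝ) ^ (-(1 - α)) * k := by
        rw [← rpow_add_one hk'.ne']; ring_nf
    _ ≤ c * k := by gcongr; exact hkc.le

lemma abs_rpow_neg_sub_rpow_neg_le {m q x y : ℝ} (hm : 0 < m) (hq : 0 < q)
    (hx : m ≤ x) (hy : m ≤ y) :
    |x ^ (-q) - y ^ (-q)| ≤ q * m ^ (-q - 1) * |x - y| := by
  have hderiv : ∀ z ∈ Set.Ici m, HasDerivWithinAt (fun z : ℝ => z ^ (-q))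
      (-q * z ^ (-q - 1)) (Set.Ici m) z := fun z hz =>
    (hasDerivAt_rpow_const (Or.inl (hm.trans_le hz).ne')).hasDerivWithinAt
  have hbound : ∀ z ∈ Set.Ici m, ‖-q * z ^ (-q - 1)‖ ≤ q * m ^ (-q - 1) := fun z hz => by
    rw [norm_mul, norm_neg, norm_of_nonneg hq.le,
      norm_of_nonneg (rpow_nonneg (hm.le.trans hz) _)]
    exact mul_le_mul_of_nonneg_left (rpow_le_rpow_of_nonpos hm hz (by linarith)) hq.le
  simpa [norm_eq_abs] using
    (convex_Ici m).norm_image_sub_le_of_norm_hasDerivWithin_le hderiv hbound hy hx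

section Probability

variable {Ω : Type*} [MeasurableSpace Ω] {μ : Measure Ω}

lemma integral_eq_measureReal_of_forall_eq_zero_or_eq_one {X : Ω → ℝ} (hX : Measurable X)
    (hval : ∀ ω, X ω = 0 ∨ X ω = 1) :
    μ[X] = μ.real {ω | X ω = 1} := by
  have hind : X = {ω | X ω = 1}.indicator 1 := funext fun ω => by
    rcases hval ω with h | h <;> simp [h]
  calc μ[X] = μ[{ω | X ω = 1}.indicator 1] := congrArg _ hind
    _ = μ.real {ω | X ω = 1} := integral_indicator_one (hX (measurableSet_singleton 1))

lemma measureReal_le_abs_sum_sub_integral_le {ι : Type*} [IsProbabilityMeasure μ]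
    {X : ι → Ω → ℝ} (hindep : iIndepFun X μ)
    (hmeas : ∀ i, AEMeasurable (X i) μ) {a b : ℝ} (hX : ∀ i, ∀ᵐ ω ∂μ, X i ω ∈ Set.Icc a b)
    (s : Finset ι) {ε : ℝ} (hε : 0 ≤ ε) :
    μ.real {ω | ε ≤ |∑ i ∈ s, (X i ω - μ[X i])|}
      ≤ 2 * exp (-2 * ε ^ 2 / (s.card * (b - a) ^ 2)) := by
  set S : Ω → ℝ := fun ω => ∑ i ∈ s, (X i ω - μ[X i])
  have hcentered : iIndepFun (fun i ω => X i ω - μ[X i]) μ := by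
    simpa only [Function.comp_def] using
      hindep.comp (fun i (x : ℝ) => x - μ[X i]) (fun i => measurable_id.sub_const _)
  have hS : HasSubgaussianMGF S (∑ i ∈ s, (‖b - a‖₊ / 2) ^ 2) μ :=
    HasSubgaussianMGF.sum_of_iIndepFun hcentered
      (fun i _ => hasSubgaussianMGF_of_mem_Icc (hmeas i) (hX i))
  have hvar : 2 * ((∑ i ∈ s, (‖b - a‖₊ / 2) ^ 2 : NNReal) : ℝ) = s.card * (b - a) ^ 2 / 2 := by
    push_cast [Finset.sum_const, nsmul_eq_mul]
    rw [norm_eq_abs, div_pow, sq_abs]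
    ring
  have htail : ∀ Y : Ω → ℝ, HasSubgaussianMGF Y (∑ i ∈ s, (‖b - a‖₊ / 2) ^ 2) μ →
      μ.real {ω | ε ≤ Y ω} ≤ exp (-2 * ε ^ 2 / (s.card * (b - a) ^ 2)) := fun Y hY => by
    refine (hY.measure_ge_le hε).trans_eq ?_
    rw [hvar, div_div_eq_mul_div]
    ring_nf
  calc μ.real {ω | ε ≤ |S ω|}
      ≤ μ.real ({ω | ε ≤ S ω} ∪ {ω | ε ≤ (-S) ω}) :=
        measureReal_mono fun ω (hω : ε ≤ |S ω|) => by
          rcases le_abs'.1 hω with h | h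
          · exact Or.inr (show ε ≤ -S ω by linarith)
          · exact Or.inl h
    _ ≤ μ.real {ω | ε ≤ S ω} + μ.real {ω | ε ≤ (-S) ω} := measureReal_union_le _ _
    _ ≤ _ := by linarith [htail _ hS, htail _ hS.neg]

lemma ae_eventually_abs_sum_Icc_sub_lt_rpow [IsProbabilityMeasure μ] {X : ℕ → Ω → ℝ}
    (hindep : iIndepFun X μ)
    (hmeas : ∀ i, AEMeasurable (X i) μ) {a b m : ℝ} (hab : a < b)
    (hX : ∀ i, ∀ᵐ ω ∂μ, X i ω ∈ Set.Icc a b) (hm : ∀ i, μ[X i] = m) {σ : ℝ} (hσ : 0 < σ) :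
    ∀ᵐ ω ∂μ, ∀ᶠ k : ℕ in atTop,
      |∑ i ∈ Finset.Icc 1 k, X i ω - k * m| < (k : ℝ) ^ (1 / 2 + σ) := by
  set E : ℕ → Set Ω :=
    fun k => {ω | (k : ℝ) ^ (1 / 2 + σ) ≤ |∑ i ∈ Finset.Icc 1 k, X i ω - k * m|}
  set c : ℝ := 2 / (b - a) ^ 2
  have hc : 0 < c := by have := sub_pos.2 hab; positivity
  have hE : ∀ k : ℕ, 0 < k → μ.real (E k) ≤ 2 * exp (-(c * (k : ℝ) ^ (2 * σ))) := fun k hk => by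
    have hk' : (0 : ℝ) < k := Nat.cast_pos.2 hk
    have hsum : ∀ ω,
        ∑ i ∈ Finset.Icc 1 k, (X i ω - μ[X i]) = ∑ i ∈ Finset.Icc 1 k, X i ω - k * m :=
      fun ω => by simp [Finset.sum_sub_distrib, hm]
    have hexp : -2 * ((k : ℝ) ^ (1 / 2 + σ)) ^ 2 / ((Finset.Icc 1 k).card * (b - a) ^ 2)
        = -(c * (k : ℝ) ^ (2 * σ)) := by
      rw [← rpow_mul_natCast hk'.le, Nat.card_Icc, add_tsub_cancel_right,
        show (1 / 2 + σ) * ((2 : ℕ) : ℝ) = 2 * σ + 1 by push_cast; ring, rpow_add_one hk'.ne']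
      simp only [c]
      field_simp
    simpa only [hsum, hexp] using
      measureReal_le_abs_sum_sub_integral_le hindep hmeas hX (Finset.Icc 1 k)
        (rpow_nonneg k.cast_nonneg (1 / 2 + σ))
  have hsummable : Summable fun k => μ.real (E k) := by
    refine ((summable_exp_neg_mul_rpow hc (by positivity : (0 : ℝ) < 2 * σ)).mul_left 2)
      |>.of_norm_bounded_eventually_nat <| (eventually_gt_atTop 0).mono fun k hk => ?_
    rw [norm_of_nonneg measureReal_nonneg]
    exact hE k hk
  have htsum : ∑' k, μ (E k) ≠ ⊤ := by
    rw [tsum_congr fun k => (ofReal_measureReal (s := E k)).symm,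
      ← ENNReal.ofReal_tsum_of_nonneg (fun _ => measureReal_nonneg) hsummable]
    exact ENNReal.ofReal_ne_top
  filter_upwards [ae_eventually_notMem htsum] with ω hω
  exact hω.mono fun k hk => not_le.1 hk

end Probability

lemma pos_and_abs_rpow_neg_sub_le_of_abs_sub_le {x k p q α : ℝ} (hk : 0 < k) (hp : 0 < p)
    (hq : 0 < q) (hα : k ^ α ≤ p / 2 * k) (hx : |x - k * p| ≤ k ^ α) :
    0 < x ∧ |x ^ (-q) - (k * p) ^ (-q)| ≤ q * (p / 2) ^ (-q - 1) * k ^ (α - q - 1) := by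
  have hm : 0 < p / 2 * k := by positivity
  have hxm : p / 2 * k ≤ x := by linarith [(abs_le.1 hx).1]
  refine ⟨hm.trans_le hxm, ?_⟩
  calc |x ^ (-q) - (k * p) ^ (-q)|
      ≤ q * (p / 2 * k) ^ (-q - 1) * |x - k * p| :=
        abs_rpow_neg_sub_rpow_neg_le hm hq hxm (by nlinarith)
    _ ≤ q * (p / 2 * k) ^ (-q - 1) * k ^ α := by gcongr
    _ = q * (p / 2) ^ (-q - 1) * k ^ (α - q - 1) := by
        rw [mul_rpow (by positivity) hk.le, mul_assoc, mul_assoc, ← rpow_add hk]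
        ring_nf

theorem stmt_15_general {Ω : Type*} [MeasurableSpace Ω] (μ : Measure Ω)
    [IsProbabilityMeasure μ]
    (I : ℕ → Ω → ℝ)
    (hval : ∀ k ω, I k ω = 0 ∨ I k ω = 1)
    (hmeas : ∀ k, Measurable (I k))
    (hindep : iIndepFun I μ)
    (p : ℝ) (hp : 0 < p)
    (hdist : ∀ k, μ {ω | I k ω = 1} = ENNReal.ofReal p)
    (q : ℝ) (hq : 1 / 2 < q)
    (σ : ℝ) (hσ0 : 0 < σ) (hσ : σ < 1 / 2) :
    ∀ᵐ ω ∂μ, ∃ C : ℝ, 0 < C ∧ ∃ K : ℕ, ∀ k ≥ K,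
      (0 < ∑ t ∈ Finset.Icc 1 k, I t ω) ∧
        |(∑ t ∈ Finset.Icc 1 k, I t ω) ^ (-q) - ((k : ℝ) * p) ^ (-q)|
          ≤ C * (k : ℝ) ^ (-(1 / 2 + q - σ)) := by
  have hmean : ∀ k, μ[I k] = p := fun k => by
    rw [integral_eq_measureReal_of_forall_eq_zero_or_eq_one (hmeas k) (hval k), measureReal_def,
      hdist k, ENNReal.toReal_ofReal hp.le]
  have hunit : ∀ k, ∀ᵐ ω ∂μ, I k ω ∈ Set.Icc (0 : ℝ) 1 := fun k =>
    ae_of_all _ fun ω => by rcases hval k ω with h | h <;> simp [h]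
  filter_upwards [ae_eventually_abs_sum_Icc_sub_lt_rpow hindep (fun k => (hmeas k).aemeasurable)
    zero_lt_one hunit hmean hσ0] with ω hω
  obtain ⟨K, hK⟩ := (hω.and ((eventually_rpow_le_mul_natCast (by linarith : 1 / 2 + σ < 1)
    (half_pos hp)).and (eventually_gt_atTop 0))).exists_forall_of_atTop
  refine ⟨q * (p / 2) ^ (-q - 1), by positivity, K, fun k hk => ?_⟩
  obtain ⟨hdev, hsmall, hkpos⟩ := hK k hk
  rw [show -(1 / 2 + q - σ) = 1 / 2 + σ - q - 1 by ring]
  exact pos_and_abs_rpow_neg_sub_le_of_abs_sub_le (Nat.cast_pos.2 hkpos) hp (by linarith) hsmall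
    hdev.le

/-- Lemma 4(b): the deviation of the random step-size `1/Γ_k^q` from the
deterministic step-size `1/(kp)^q` is almost surely `O(k^{-(1/2+q-σ)})`. -/
theorem stmt_15 {Ω : Type*} [MeasurableSpace Ω] (μ : Measure Ω)
    [IsProbabilityMeasure μ]
    (I : ℕ → Ω → ℝ)
    (hval : ∀ k ω, I k ω = 0 ∨ I k ω = 1)
    (hmeas : ∀ k, Measurable (I k))
    (hindep : iIndepFun I μ)
    (p : ℝ) (hp : 0 < p) (hp1 : p ≤ 1)
    (hdist : ∀ k, μ {ω | I k ω = 1} = ENNReal.ofReal p)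
    (q : ℝ) (hq : 1 / 2 < q) (hq1 : q ≤ 1)
    (σ : ℝ) (hσ0 : 0 < σ) (hσ : σ < 1 / 2) :
    ∀ᵐ ω ∂μ, ∃ C : ℝ, 0 < C ∧ ∃ K : ℕ, ∀ k ≥ K,
      (0 < ∑ t ∈ Finset.Icc 1 k, I t ω) ∧
        |(∑ t ∈ Finset.Icc 1 k, I t ω) ^ (-q) - ((k : ℝ) * p) ^ (-q)|
          ≤ C * (k : ℝ) ^ (-(1 / 2 + q - σ)) :=
  stmt_15_general μ I hval hmeas hindep p hp hdist q hq σ hσ0 hσ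
end

section
/- Let d ≥ 2 be an integer, let E be the d-dimensional real Euclidean space, let f : E → ℝ be a bounded continuous function, and let δ > 0. Define the smoothed function f̂(x) as the average of f over the closed ball of radius δ centered at x with respect to Lebesgue measure. Then f̂ is differentiable at every x ∈ E and its gradient satisfies ∇f̂(x) = (d/δ) · E_{λ}[ f(x + δλ) · λ ], where the expectation is taken with respect to the uniform probability measure on the unit sphere of E. -/
/-!
In polar coordinates centred at `x`, a unit direction `v` meets `closedBall (x + h) δ` in the
segment `r ∈ (0, ρ(v, h)]`, where `ρ(v, h) = δ + ⟪v, h⟫ + O(‖h‖²)`. Hence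
`∫_{B(x+h,δ)} f - ∫_{B(x,δ)} f = ∫_{S} ∫_δ^{ρ(v,h)} r^{d-1} f(x + r v) dr dσ(v)`, and since
`r ↦ r^{d-1} f(x + r v)` is continuous at `r = δ` uniformly in `v ∈ S`, this equals
`δ^{d-1} ∫_S f(x + δ v) ⟪v, h⟫ dσ(v) + o(‖h‖)`. Dividing by `vol B(x, δ) = δ^d σ(S) / d` turns
the surface integral into `(d / δ)` times the spherical average.
-/

open MeasureTheory Measure Set Metric Filter Topology Asymptotics
open scoped RealInnerProductSpace

local notation "dim" => Module.finrank ℝ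

theorem HasGradientAt.const_mul {E : Type*} [NormedAddCommGroup E] [InnerProductSpace ℝ E]
    [CompleteSpace E] {f : E → ℝ} {f' x : E} (hf : HasGradientAt f f' x) (a : ℝ) :
    HasGradientAt (fun y => a * f y) (a • f') x := by
  rw [hasGradientAt_iff_hasFDerivAt] at hf ⊢
  simpa using hf.const_mul a

theorem Asymptotics.isLittleO_integral_of_eventually_forall_norm_le {ι α F G : Type*}
    [NormedAddCommGroup F] [NormedSpace ℝ F] [SeminormedAddCommGroup G] [MeasurableSpace α]
    {σ : Measure α} [IsFiniteMeasure σ] {l : Filter ι} {Ψ : ι → α → F} {g : ι → G}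
    (hΨ : ∀ ε > 0, ∀ᶠ i in l, ∀ a, ‖Ψ i a‖ ≤ ε * ‖g i‖) :
    (fun i => ∫ a, Ψ i a ∂σ) =o[l] g := by
  refine isLittleO_iff.2 fun c hc => ?_
  have hσ : 0 ≤ σ.real univ := measureReal_nonneg
  filter_upwards [hΨ (c / (σ.real univ + 1)) (by positivity)] with i hi
  calc ‖∫ a, Ψ i a ∂σ‖ ≤ c / (σ.real univ + 1) * ‖g i‖ * σ.real univ :=
        norm_integral_le_of_norm_le_const (Eventually.of_forall hi)
    _ ≤ c * ‖g i‖ := by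
        rw [div_mul_eq_mul_div, div_mul_eq_mul_div, div_le_iff₀ (by positivity)]
        nlinarith [norm_nonneg (g i)]

namespace MeasureTheory

section Polar

variable {E F : Type*} [NormedAddCommGroup E] [NormedSpace ℝ E] [MeasurableSpace E] [BorelSpace E]
  [FiniteDimensional ℝ E] (μ : Measure E) [μ.IsAddHaarMeasure]
  [NormedAddCommGroup F] [NormedSpace ℝ F]

theorem integral_volumeIoiPow (n : ℕ) (g : ℝ → F) :
    ∫ r : Ioi (0:ℝ), g r ∂volumeIoiPow n = ∫ r in Ioi (0:ℝ), r ^ n • g r := by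
  simp only [volumeIoiPow, ENNReal.ofReal]
  rw [integral_withDensity_eq_integral_smul (measurable_subtype_coe.pow_const _).real_toNNReal,
    integral_subtype_comap measurableSet_Ioi fun r => (r ^ n).toNNReal • g r]
  refine setIntegral_congr_fun measurableSet_Ioi fun r hr => ?_
  rw [NNReal.smul_def, Real.coe_toNNReal _ (pow_nonneg hr.out.le _)]

theorem measurePreserving_homeomorphUnitSphereProd_symm :
    MeasurePreserving (homeomorphUnitSphereProd E).toMeasurableEquiv.symm
      (μ.toSphere.prod (volumeIoiPow (dim E - 1))) (μ.comap Subtype.val) :=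
  μ.measurePreserving_homeomorphUnitSphereProd.symm _

variable [Nontrivial E]

omit [NormedSpace ℝ F] in
theorem integrable_toSphere_prod_iff {G : E → F} :
    Integrable (fun p : sphere (0:E) 1 × Ioi (0:ℝ) => G (p.2.1 • p.1.1))
      (μ.toSphere.prod (volumeIoiPow (dim E - 1))) ↔ Integrable G μ := by
  conv_rhs => rw [← restrict_compl_singleton (μ := μ) 0]
  rw [← IntegrableOn, integrableOn_iff_comap_subtypeVal (measurableSet_singleton _).compl,
    ← (measurePreserving_homeomorphUnitSphereProd_symm μ).integrable_comp_emb
      (MeasurableEquiv.measurableEmbedding _)]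
  rfl

theorem integral_eq_integral_toSphere_prod (G : E → F) :
    ∫ z, G z ∂μ = ∫ p : sphere (0:E) 1 × Ioi (0:ℝ), G (p.2.1 • p.1.1)
      ∂(μ.toSphere.prod (volumeIoiPow (dim E - 1))) := by
  conv_lhs => rw [← restrict_compl_singleton (μ := μ) 0]
  rw [← integral_subtype_comap (measurableSet_singleton _).compl,
    ← (measurePreserving_homeomorphUnitSphereProd_symm μ).integral_comp']
  rfl

theorem integral_eq_integral_toSphere_integral_Ioi [CompleteSpace F] {G : E → F}
    (hG : Integrable G μ) :
    ∫ z, G z ∂μ = ∫ v : sphere (0:E) 1,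
      (∫ r in Ioi (0:ℝ), r ^ (dim E - 1) • G (r • (v:E))) ∂μ.toSphere := by
  rw [integral_eq_integral_toSphere_prod, integral_prod _ ((integrable_toSphere_prod_iff μ).2 hG)]
  exact integral_congr_ae (.of_forall fun v => integral_volumeIoiPow _ fun r => G (r • (v:E)))

theorem Integrable.integral_Ioi_toSphere {G : E → F} (hG : Integrable G μ) :
    Integrable (fun v : sphere (0:E) 1 =>
      ∫ r in Ioi (0:ℝ), r ^ (dim E - 1) • G (r • (v:E))) μ.toSphere :=
  ((integrable_toSphere_prod_iff μ).2 hG).integral_prod_left.congr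
    (.of_forall fun v => integral_volumeIoiPow _ fun r => G (r • (v:E)))

end Polar

end MeasureTheory

section ExitRadius

variable {E : Type*} [NormedAddCommGroup E] [InnerProductSpace ℝ E] {δ r : ℝ} {v h : E}

/-- For a unit vector `v` and `‖h‖ ≤ δ`, the larger root `r` of `‖r • v - h‖ = δ`, where the ray
`r ↦ r • v` leaves `closedBall h δ`. -/
noncomputable def exitRadius (δ : ℝ) (v h : E) : ℝ := ⟪v, h⟫ + √(δ ^ 2 - ‖h‖ ^ 2 + ⟪v, h⟫ ^ 2)

theorem abs_inner_le_sqrt (v : E) (hh : ‖h‖ ≤ δ) :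
    |⟪v, h⟫| ≤ √(δ ^ 2 - ‖h‖ ^ 2 + ⟪v, h⟫ ^ 2) :=
  Real.abs_le_sqrt (by nlinarith [norm_nonneg h])

theorem sqrt_le_of_norm_eq_one (hv : ‖v‖ = 1) (hδ : 0 ≤ δ) :
    √(δ ^ 2 - ‖h‖ ^ 2 + ⟪v, h⟫ ^ 2) ≤ δ := by
  have : ⟪v, h⟫ ^ 2 ≤ ‖h‖ ^ 2 := sq_le_sq.2 (by simpa [hv] using abs_real_inner_le_norm v h)
  exact (Real.sqrt_le_left hδ).2 (by linarith)

theorem exitRadius_nonneg (hh : ‖h‖ ≤ δ) : 0 ≤ exitRadius δ v h := by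
  unfold exitRadius
  linarith [neg_abs_le ⟪v, h⟫, abs_inner_le_sqrt v hh]

theorem exitRadius_zero (hδ : 0 ≤ δ) (v : E) : exitRadius δ v 0 = δ := by
  simp [exitRadius, Real.sqrt_sq hδ]

theorem norm_smul_sub_le_iff_le_exitRadius (hv : ‖v‖ = 1) (hh : ‖h‖ ≤ δ) (hr : 0 < r) :
    ‖r • v - h‖ ≤ δ ↔ r ≤ exitRadius δ v h := by
  have hA : 0 ≤ δ ^ 2 - ‖h‖ ^ 2 + ⟪v, h⟫ ^ 2 := by nlinarith [norm_nonneg h]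
  have hnorm : ‖r • v - h‖ ^ 2 = (r - ⟪v, h⟫) ^ 2 - (δ ^ 2 - ‖h‖ ^ 2 + ⟪v, h⟫ ^ 2) + δ ^ 2 := by
    rw [norm_sub_sq_real, norm_smul, real_inner_smul_left, hv, Real.norm_eq_abs, abs_of_pos hr]
    ring
  rw [← sq_le_sq₀ (norm_nonneg _) ((norm_nonneg h).trans hh), hnorm, add_le_iff_nonpos_left,
    sub_nonpos, Real.sq_le hA, exitRadius, ← sub_le_iff_le_add']
  have := abs_inner_le_sqrt v hh
  exact ⟨And.right, fun hle => ⟨by linarith [le_abs_self ⟪v, h⟫], hle⟩⟩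

theorem abs_exitRadius_sub_sub_inner_le (hv : ‖v‖ = 1) (hh : ‖h‖ ≤ δ) (hδ : 0 < δ) :
    |exitRadius δ v h - δ - ⟪v, h⟫| ≤ ‖h‖ ^ 2 / δ := by
  have hA : 0 ≤ δ ^ 2 - ‖h‖ ^ 2 + ⟪v, h⟫ ^ 2 := by nlinarith [norm_nonneg h]
  have hs := Real.sq_sqrt hA
  have hsδ := sqrt_le_of_norm_eq_one (h := h) hv hδ.le
  have hsub : exitRadius δ v h - δ - ⟪v, h⟫ = √(δ ^ 2 - ‖h‖ ^ 2 + ⟪v, h⟫ ^ 2) - δ := by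
    unfold exitRadius; ring
  rw [hsub, abs_of_nonpos (by linarith), le_div_iff₀ hδ]
  nlinarith [Real.sqrt_nonneg (δ ^ 2 - ‖h‖ ^ 2 + ⟪v, h⟫ ^ 2), sq_nonneg ⟪v, h⟫]

theorem abs_exitRadius_sub_le (hv : ‖v‖ = 1) (hh : ‖h‖ ≤ δ) (hδ : 0 < δ) :
    |exitRadius δ v h - δ| ≤ 2 * ‖h‖ := by
  have hinner : |⟪v, h⟫| ≤ ‖h‖ := by simpa [hv] using abs_real_inner_le_norm v h
  have hsq : ‖h‖ ^ 2 / δ ≤ ‖h‖ := by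
    rw [div_le_iff₀ hδ]
    nlinarith [norm_nonneg h]
  calc |exitRadius δ v h - δ| = |(exitRadius δ v h - δ - ⟪v, h⟫) + ⟪v, h⟫| := by ring_nf
    _ ≤ |exitRadius δ v h - δ - ⟪v, h⟫| + |⟪v, h⟫| := abs_add_le _ _
    _ ≤ 2 * ‖h‖ := by linarith [abs_exitRadius_sub_sub_inner_le hv hh hδ]

variable {F : Type*} [NormedAddCommGroup F] [NormedSpace ℝ F]

theorem integral_Ioi_indicator_closedBall_eq_intervalIntegral (n : ℕ) (g : E → F) {v : E}
    (hv : ‖v‖ = 1) (hh : ‖h‖ ≤ δ) :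
    ∫ r in Ioi (0:ℝ), r ^ n • (closedBall h δ).indicator g (r • v) =
      ∫ r in (0:ℝ)..exitRadius δ v h, r ^ n • g (r • v) := by
  rw [intervalIntegral.integral_of_le (exitRadius_nonneg hh), ← Ioi_inter_Iic,
    ← setIntegral_indicator measurableSet_Iic]
  refine setIntegral_congr_fun measurableSet_Ioi fun r hr => ?_
  have hmem : r • v ∈ closedBall h δ ↔ r ∈ Iic (exitRadius δ v h) := by
    rw [mem_closedBall, dist_eq_norm, mem_Iic, norm_smul_sub_le_iff_le_exitRadius hv hh hr]
  by_cases hr' : r ∈ Iic (exitRadius δ v h)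
  · rw [indicator_of_mem hr', indicator_of_mem (hmem.2 hr')]
  · rw [indicator_of_notMem hr', indicator_of_notMem (mt hmem.1 hr'), smul_zero]

end ExitRadius

theorem setIntegral_closedBall_add {G F : Type*} [NormedAddCommGroup G] [MeasurableSpace G]
    [BorelSpace G] [NormedAddCommGroup F] [NormedSpace ℝ F] (μ : Measure G) [μ.IsAddLeftInvariant]
    (f : G → F) (x h : G) (δ : ℝ) :
    ∫ y in closedBall (x + h) δ, f y ∂μ = ∫ z in closedBall h δ, f (x + z) ∂μ := by
  rw [← (measurePreserving_add_left μ x).setIntegral_preimage_emb (measurableEmbedding_addLeft x),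
    preimage_add_left_closedBall, neg_add_cancel_left]

section BallPolar

variable {E F : Type*} [NormedAddCommGroup E] [InnerProductSpace ℝ E] [MeasurableSpace E]
  [BorelSpace E] [FiniteDimensional ℝ E] (μ : Measure E) [μ.IsAddHaarMeasure]
  [Nontrivial E] [NormedAddCommGroup F] [NormedSpace ℝ F] {δ : ℝ} {h : E}

theorem setIntegral_closedBall_eq_integral_toSphere [CompleteSpace F] {f : E → F}
    (hf : IntegrableOn f (closedBall h δ) μ) (hh : ‖h‖ ≤ δ) :
    ∫ z in closedBall h δ, f z ∂μ = ∫ v : sphere (0:E) 1,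
      (∫ r in (0:ℝ)..exitRadius δ (v:E) h, r ^ (dim E - 1) • f (r • (v:E))) ∂μ.toSphere := by
  rw [← integral_indicator measurableSet_closedBall,
    integral_eq_integral_toSphere_integral_Ioi μ (hf.integrable_indicator measurableSet_closedBall)]
  exact integral_congr_ae (.of_forall fun v =>
    integral_Ioi_indicator_closedBall_eq_intervalIntegral _ f (norm_eq_of_mem_sphere v) hh)

theorem MeasureTheory.IntegrableOn.integrable_intervalIntegral_exitRadius {f : E → F}
    (hf : IntegrableOn f (closedBall h δ) μ) (hh : ‖h‖ ≤ δ) :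
    Integrable (fun v : sphere (0:E) 1 =>
      ∫ r in (0:ℝ)..exitRadius δ (v:E) h, r ^ (dim E - 1) • f (r • (v:E))) μ.toSphere :=
  ((hf.integrable_indicator measurableSet_closedBall).integral_Ioi_toSphere μ).congr
    (.of_forall fun v =>
      integral_Ioi_indicator_closedBall_eq_intervalIntegral _ f (norm_eq_of_mem_sphere v) hh)

end BallPolar

section Estimate

variable {E : Type*} [NormedAddCommGroup E] [InnerProductSpace ℝ E] [FiniteDimensional ℝ E]
  {δ ε : ℝ}

theorem eventually_abs_integral_exitRadius_sub_le {φ : ℝ → sphere (0:E) 1 → ℝ}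
    (hφ : Continuous ↿φ) (hδ : 0 < δ) (hε : 0 < ε) :
    ∀ᶠ h in 𝓝 (0:E), ∀ v : sphere (0:E) 1,
      |(∫ r in δ..exitRadius δ (v:E) h, φ r v) - φ δ v * ⟪(v:E), h⟫| ≤ ε * ‖h‖ := by
  obtain ⟨R, hR, hφR⟩ : ∃ R > 0, ∀ v, |φ δ v| ≤ R := by
    obtain ⟨R, hR, hbound⟩ :=
      (isCompact_range (hφ.comp (Continuous.prodMk_right δ))).isBounded.exists_pos_norm_le
    exact ⟨R, hR, fun v => hbound _ ⟨v, rfl⟩⟩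
  obtain ⟨η, hη, hφη⟩ : ∃ η > 0, ∀ r, |r - δ| < η → ∀ v, |φ r v - φ δ v| < ε / 4 := by
    obtain ⟨η, hη, hclose⟩ := Metric.eventually_nhds_iff.1 <|
      Metric.tendstoUniformly_iff.1 (hφ.tendstoUniformly φ δ) (ε / 4) (by positivity)
    exact ⟨η, hη, fun r hr v => by simpa [abs_sub_comm, Real.dist_eq] using hclose hr v⟩
  have hsmall : ∀ c > 0, ∀ᶠ h in 𝓝 (0:E), ‖h‖ < c := fun c hc => by
    filter_upwards [ball_mem_nhds (0:E) hc] with h hh using mem_ball_zero_iff.1 hh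
  filter_upwards [hsmall δ hδ, hsmall (η / 2) (by positivity),
    hsmall (ε * δ / (2 * R)) (by positivity)] with h hhδ hhη hhR v
  have hv := norm_eq_of_mem_sphere v
  set ρ := exitRadius δ (v:E) h
  have hρ : |ρ - δ| ≤ 2 * ‖h‖ := abs_exitRadius_sub_le hv hhδ.le hδ
  have hφv : Continuous fun r => φ r v := hφ.comp (continuous_id.prodMk continuous_const)
  -- the oscillation of `φ · v` near `δ`, plus the second-order error of `ρ ≈ δ + ⟪v, h⟫`
  have hsplit : (∫ r in δ..ρ, φ r v) - φ δ v * ⟪(v:E), h⟫ =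
      (∫ r in δ..ρ, (φ r v - φ δ v)) + φ δ v * (ρ - δ - ⟪(v:E), h⟫) := by
    rw [intervalIntegral.integral_sub (hφv.intervalIntegrable _ _) intervalIntegrable_const,
      intervalIntegral.integral_const, smul_eq_mul]
    ring
  have hnear : |∫ r in δ..ρ, (φ r v - φ δ v)| ≤ ε / 4 * |ρ - δ| := by
    rw [← Real.norm_eq_abs]
    refine intervalIntegral.norm_integral_le_of_norm_le_const fun r hr => ?_
    rw [Real.norm_eq_abs]
    exact (hφη r (by linarith [abs_sub_left_of_mem_uIcc (uIoc_subset_uIcc hr)]) v).le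
  have hquad : |φ δ v * (ρ - δ - ⟪(v:E), h⟫)| ≤ R * (‖h‖ ^ 2 / δ) := by
    rw [abs_mul]
    exact mul_le_mul (hφR v) (abs_exitRadius_sub_sub_inner_le hv hhδ.le hδ) (abs_nonneg _) hR.le
  have hquad' : R * (‖h‖ ^ 2 / δ) ≤ ε / 2 * ‖h‖ := by
    rw [lt_div_iff₀ (by positivity)] at hhR
    rw [mul_div_assoc', div_le_iff₀ hδ]
    nlinarith [norm_nonneg h]
  rw [hsplit]
  calc _ ≤ |∫ r in δ..ρ, (φ r v - φ δ v)| + |φ δ v * (ρ - δ - ⟪(v:E), h⟫)| := abs_add_le _ _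
    _ ≤ ε / 4 * (2 * ‖h‖) + ε / 2 * ‖h‖ :=
        add_le_add (hnear.trans (by gcongr)) (hquad.trans hquad')
    _ = ε * ‖h‖ := by ring

end Estimate

section Gradient

variable {E : Type*} [NormedAddCommGroup E] [InnerProductSpace ℝ E] [MeasurableSpace E]
  [BorelSpace E] [FiniteDimensional ℝ E] [Nontrivial E] (μ : Measure E) [μ.IsAddHaarMeasure]
  {f : E → ℝ} {δ : ℝ}

theorem setIntegral_closedBall_add_sub_sub_inner (hf : Continuous f) (hδ : 0 < δ) (x : E)
    {h : E} (hh : ‖h‖ ≤ δ) :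
    (∫ y in closedBall (x + h) δ, f y ∂μ) - (∫ y in closedBall x δ, f y ∂μ) -
        ⟪δ ^ (dim E - 1) • ∫ v : sphere (0:E) 1, f (x + δ • (v:E)) • (v:E) ∂μ.toSphere, h⟫ =
      ∫ v : sphere (0:E) 1, ((∫ r in δ..exitRadius δ (v:E) h, r ^ (dim E - 1) * f (x + r • (v:E)))
        - δ ^ (dim E - 1) * f (x + δ • (v:E)) * ⟪(v:E), h⟫) ∂μ.toSphere := by
  set φ : ℝ → sphere (0:E) 1 → ℝ := fun r v => r ^ (dim E - 1) * f (x + r • (v:E))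
  set radial : E → sphere (0:E) 1 → ℝ := fun h v => ∫ r in (0:ℝ)..exitRadius δ (v:E) h, φ r v
  have hfx : ∀ h, IntegrableOn (fun z => f (x + z)) (closedBall h δ) μ := fun h =>
    (hf.comp (continuous_const_add x)).continuousOn.integrableOn_compact (isCompact_closedBall h δ)
  have hpolar : ∀ h : E, ‖h‖ ≤ δ →
      ∫ y in closedBall (x + h) δ, f y ∂μ = ∫ v, radial h v ∂μ.toSphere := fun h hh => by
    simpa only [setIntegral_closedBall_add, smul_eq_mul] using
      setIntegral_closedBall_eq_integral_toSphere μ (hfx h) hh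
  have hradial_int : ∀ h : E, ‖h‖ ≤ δ → Integrable (radial h) μ.toSphere := fun h hh => by
    simpa only [smul_eq_mul] using (hfx h).integrable_intervalIntegral_exitRadius μ hh
  have hshell : ∀ v, radial h v - radial 0 v = ∫ r in δ..exitRadius δ (v:E) h, φ r v := fun v => by
    have hφv : Continuous fun r => φ r v := by fun_prop
    rw [intervalIntegral.integral_interval_sub_left (hφv.intervalIntegrable _ _)
      (hφv.intervalIntegrable _ _), exitRadius_zero hδ.le]
  have hint : Integrable (fun v : sphere (0:E) 1 => f (x + δ • (v:E)) • (v:E)) μ.toSphere :=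
    (by fun_prop : Continuous fun v : sphere (0:E) 1 => f (x + δ • (v:E)) • (v:E))
      |>.integrable_of_hasCompactSupport (.of_compactSpace _)
  have hinner : ⟪δ ^ (dim E - 1) •
      ∫ v : sphere (0:E) 1, f (x + δ • (v:E)) • (v:E) ∂μ.toSphere, h⟫ =
        ∫ v, φ δ v * ⟪(v:E), h⟫ ∂μ.toSphere := by
    rw [real_inner_smul_left, real_inner_comm, ← integral_inner hint, ← integral_const_mul]
    simp only [real_inner_smul_right, real_inner_comm h, φ, mul_assoc]
  have hlin_int : Integrable (fun v : sphere (0:E) 1 => φ δ v * ⟪(v:E), h⟫) μ.toSphere :=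
    (by fun_prop : Continuous fun v : sphere (0:E) 1 => φ δ v * ⟪(v:E), h⟫)
      |>.integrable_of_hasCompactSupport (.of_compactSpace _)
  have h0 : ‖(0:E)‖ ≤ δ := by simpa using hδ.le
  have hpolar0 := hpolar 0 h0
  rw [add_zero] at hpolar0
  rw [hpolar h hh, hpolar0, hinner,
    ← integral_sub (hradial_int h hh) (hradial_int 0 h0),
    ← integral_sub (f := fun v => radial h v - radial 0 v)
      ((hradial_int h hh).sub (hradial_int 0 h0)) hlin_int]
  simp only [hshell, φ]

theorem hasGradientAt_setIntegral_closedBall (hf : Continuous f) (hδ : 0 < δ) (x : E) :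
    HasGradientAt (fun c => ∫ y in closedBall c δ, f y ∂μ)
      (δ ^ (dim E - 1) • ∫ v : sphere (0:E) 1, f (x + δ • (v:E)) • (v:E) ∂μ.toSphere) x := by
  have hφ : Continuous ↿fun r (v : sphere (0:E) 1) => r ^ (dim E - 1) * f (x + r • (v:E)) := by
    fun_prop
  rw [hasGradientAt_iff_isLittleO_nhds_zero]
  refine (isLittleO_integral_of_eventually_forall_norm_le (σ := μ.toSphere) fun ε hε =>
    eventually_abs_integral_exitRadius_sub_le hφ hδ hε).congr' ?_ .rfl
  filter_upwards [closedBall_mem_nhds (0:E) hδ] with h hh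
  exact (setIntegral_closedBall_add_sub_sub_inner μ hf hδ x (mem_closedBall_zero_iff.1 hh)).symm

theorem hasGradientAt_setAverage_closedBall (hf : Continuous f) (hδ : 0 < δ) (x : E) :
    HasGradientAt (fun c => ⨍ y in closedBall c δ, f y ∂μ)
      (((dim E : ℝ) / δ) • ⨍ v : sphere (0:E) 1, f (x + δ • (v:E)) • (v:E) ∂μ.toSphere) x := by
  have hball : 0 < μ.real (ball (0:E) 1) :=
    ENNReal.toReal_pos (measure_ball_pos μ 0 one_pos).ne' measure_ball_lt_top.ne
  simp only [setAverage_eq, addHaar_real_closedBall μ _ hδ.le, smul_eq_mul]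
  rw [average_eq, toSphere_real_apply_univ]
  convert (hasGradientAt_setIntegral_closedBall μ hf hδ x).const_mul
    (δ ^ dim E * μ.real (ball 0 1))⁻¹ using 1
  obtain ⟨n, hn⟩ : ∃ n, dim E = n + 1 := Nat.exists_eq_add_one.2 Module.finrank_pos
  rw [smul_smul, smul_smul, hn, Nat.add_sub_cancel, pow_succ]
  congr 1
  field_simp

end Gradient

theorem stmt_16_general (d : ℕ) (hd : 2 ≤ d)
    (f : EuclideanSpace ℝ (Fin d) → ℝ)
    (hf_cont : Continuous f)
    (δ : ℝ) (hδ : 0 < δ)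
    (fhat : EuclideanSpace ℝ (Fin d) → ℝ)
    (hfhat : ∀ x, fhat x = ⨍ y in Metric.closedBall x δ, f y) :
    ∀ x : EuclideanSpace ℝ (Fin d),
      HasGradientAt fhat
        (((d : ℝ) / δ) •
          ⨍ v : Metric.sphere (0 : EuclideanSpace ℝ (Fin d)) 1,
            f (x + δ • (v : EuclideanSpace ℝ (Fin d))) • (v : EuclideanSpace ℝ (Fin d))
              ∂((volume : Measure (EuclideanSpace ℝ (Fin d))).toSphere)) x := by
  intro x
  have : Nontrivial (EuclideanSpace ℝ (Fin d)) :=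
    Module.nontrivial_of_finrank_pos (R := ℝ) (by rw [finrank_euclideanSpace_fin]; omega)
  have hgrad := hasGradientAt_setAverage_closedBall volume hf_cont hδ x
  rw [finrank_euclideanSpace_fin] at hgrad
  rwa [funext hfhat]

/-- SPSA/one-point gradient estimation identity: the smoothed function
`f̂(x) = ⨍_{B̄(x,δ)} f` is differentiable with gradient
`(d/δ) · E_{λ ∼ Unif(S^{d-1})}[f(x + δλ) λ]`. -/
theorem stmt_16 (d : ℕ) (hd : 2 ≤ d)
    (f : EuclideanSpace ℝ (Fin d) → ℝ)
    (hf_cont : Continuous f) (hf_bdd : ∃ M : ℝ, ∀ x, |f x| ≤ M)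
    (δ : ℝ) (hδ : 0 < δ)
    (fhat : EuclideanSpace ℝ (Fin d) → ℝ)
    (hfhat : ∀ x, fhat x = ⨍ y in Metric.closedBall x δ, f y) :
    ∀ x : EuclideanSpace ℝ (Fin d),
      HasGradientAt fhat
        (((d : ℝ) / δ) •
          ⨍ v : Metric.sphere (0 : EuclideanSpace ℝ (Fin d)) 1,
            f (x + δ • (v : EuclideanSpace ℝ (Fin d))) • (v : EuclideanSpace ℝ (Fin d))
              ∂((volume : Measure (EuclideanSpace ℝ (Fin d))).toSphere)) x :=
  stmt_16_general d hd f hf_cont δ hδ fhat hfhat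
end
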